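/- arXiv:2308.10793 — 2 statements merged into one kernel-verified Lean document; each statement's English description precedes it below -/
import Mathlib

section
/- For every linear reservoir system R = (W, V, h) with input streams bounded by M > 0 and every ε > 0, there exists a Simple Multi-Cycle Reservoir R' = (W', V', h') (of some order k and some state dimension n') that is ε-close to R; moreover ‖W'‖ = ‖W‖ and h' is h with linearly transformed domain. -/
/-- Operator norm of a complex matrix w.r.t. Euclidean norms. -/
noncomputable def opNorm {ι κ : Type*} [Fintype ι] [Fintype κ] [DecidableEq κ]
    (A : Matrix ι κ ℂ) : ℝ :=
  ‖LinearMap.toContinuousLinearMap (Matrix.toEuclideanLin A)‖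

/-- The state of the linear reservoir system `(W, V, ·)` at time `t` on input stream `c`. -/
noncomputable def resState {ι κ : Type*} [Fintype ι] [DecidableEq ι] [Fintype κ]
    (W : Matrix ι ι ℂ) (V : Matrix ι κ ℂ)
    (c : ℤ → EuclideanSpace ℂ κ) (t : ℤ) : EuclideanSpace ℂ ι :=
  ∑' k : ℕ, WithLp.toLp 2 (Matrix.mulVec (W ^ k * V) (c (t - k)))

/-- The permutation matrix associated to a permutation `σ` (entry `i j` is `1` iff `σ i = j`). -/
def permMatrix {ι : Type*} [DecidableEq ι] (σ : Equiv.Perm ι) : Matrix ι ι ℂ :=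
  Matrix.of fun i j => if σ i = j then 1 else 0

/-- A permutation is a full cycle iff it acts transitively. -/
def IsFullCycle {ι : Type*} (σ : Equiv.Perm ι) : Prop :=
  ∀ i j : ι, ∃ k : ℕ, (σ ^ k) i = j

def IsContractiveFullCycle {ι : Type*} [DecidableEq ι] (W : Matrix ι ι ℂ) : Prop :=
  ∃ (l : ℝ) (σ : Equiv.Perm ι), 0 < l ∧ l < 1 ∧ IsFullCycle σ ∧ W = (l : ℂ) • permMatrix σ

/-- Two linear reservoir systems are `ε`-close for input streams bounded by `Mb`. -/
def EpsClose {ι₁ ι₂ κ od : Type*} [Fintype ι₁] [DecidableEq ι₁] [Fintype ι₂] [DecidableEq ι₂]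
    [Fintype κ] [Fintype od] (Mb ε : ℝ)
    (W₁ : Matrix ι₁ ι₁ ℂ) (V₁ : Matrix ι₁ κ ℂ) (h₁ : EuclideanSpace ℂ ι₁ → EuclideanSpace ℂ od)
    (W₂ : Matrix ι₂ ι₂ ℂ) (V₂ : Matrix ι₂ κ ℂ) (h₂ : EuclideanSpace ℂ ι₂ → EuclideanSpace ℂ od) :
    Prop :=
  ∀ c : ℤ → EuclideanSpace ℂ κ, (∀ t : ℤ, t ≤ 0 → ‖c t‖ ≤ Mb) →
    ∀ t : ℤ, t ≤ 0 → ‖h₁ (resState W₁ V₁ c t) - h₂ (resState W₂ V₂ c t)‖ < ε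

/-- `h'` is `h` with linearly transformed domain. -/
def LinTransformedDomain {ι₁ ι₂ od : Type*} [Fintype ι₂]
    (h : EuclideanSpace ℂ ι₁ → EuclideanSpace ℂ od)
    (h' : EuclideanSpace ℂ ι₂ → EuclideanSpace ℂ od) : Prop :=
  ∃ A : Matrix ι₁ ι₂ ℂ, ∀ x : EuclideanSpace ℂ ι₂, h' x = h (WithLp.toLp 2 (Matrix.mulVec A x))

/-! The state of a linear reservoir is the input filtered by the impulse response
`j ↦ W ^ j * V`, and the readout is uniformly continuous on the bounded set of reachable states.
Hence it suffices to reproduce the impulse response up to a horizon `N`: since both impulse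
responses decay like `‖V‖ ‖W‖ ^ j`, the tails beyond `N` move the state by `O(‖W‖ ^ N)`.

Take `m + 1` cycles of length `N`, each `‖W‖` times a rotation, fed with the all-ones input
weights except for a single `-1` marker per input coordinate. After `j` steps the marker of input
`q` sits at position `j mod N` of cycle `q + 1`, so a linear readout weighting that position by
`‖W‖⁻¹ ^ i • W ^ i * V` (and using cycle `0` to cancel the all-ones part) turns the SMCR into a
system with impulse response `‖W‖ ^ (N ⌊j / N⌋) • W ^ (j mod N) * V`. This agrees with
`W ^ j * V` for `j < N` and is bounded by `‖V‖ ‖W‖ ^ j`. -/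

open Filter Topology Metric Matrix
open scoped Matrix.Norms.L2Operator

lemma opNorm_eq_norm {ι κ : Type*} [Fintype ι] [Fintype κ] [DecidableEq κ] (A : Matrix ι κ ℂ) :
    opNorm A = ‖A‖ :=
  rfl

lemma Matrix.l2_opNorm_pow_mul_le {ι κ : Type*} [Fintype ι] [DecidableEq ι] [Fintype κ]
    [DecidableEq κ] (A : Matrix ι ι ℂ) (B : Matrix ι κ ℂ) (j : ℕ) :
    ‖A ^ j * B‖ ≤ ‖B‖ * ‖A‖ ^ j := by
  induction j with
  | zero => simp
  | succ j ih =>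
    calc ‖A ^ (j + 1) * B‖ = ‖A * (A ^ j * B)‖ := by rw [pow_succ', Matrix.mul_assoc]
      _ ≤ ‖A‖ * (‖B‖ * ‖A‖ ^ j) := (l2_opNorm_mul _ _).trans (by gcongr)
      _ = ‖B‖ * ‖A‖ ^ (j + 1) := by ring

lemma Matrix.l2_opNorm_pow_smul_pow_mul_le {ι κ : Type*} [Fintype ι] [DecidableEq ι] [Fintype κ]
    [DecidableEq κ] (W : Matrix ι ι ℂ) (V : Matrix ι κ ℂ) (a b : ℕ) :
    ‖(‖W‖ : ℂ) ^ a • (W ^ b * V)‖ ≤ ‖V‖ * ‖W‖ ^ (a + b) := by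
  rw [norm_smul, norm_pow, Complex.norm_real, norm_norm, pow_add]
  calc ‖W‖ ^ a * ‖W ^ b * V‖ ≤ ‖W‖ ^ a * (‖V‖ * ‖W‖ ^ b) := by
        gcongr
        exact l2_opNorm_pow_mul_le W V b
    _ = ‖V‖ * (‖W‖ ^ a * ‖W‖ ^ b) := by ring

section Filter

variable {ι κ : Type*} [Fintype ι] [Fintype κ]

noncomputable def filterOutput (T : ℕ → Matrix ι κ ℂ) (c : ℤ → EuclideanSpace ℂ κ) (t : ℤ) :
    EuclideanSpace ℂ ι :=
  ∑' j : ℕ, WithLp.toLp 2 (T j *ᵥ c (t - j))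

lemma resState_eq_filterOutput [DecidableEq ι] (W : Matrix ι ι ℂ) (V : Matrix ι κ ℂ) :
    resState W V = filterOutput fun j => W ^ j * V :=
  rfl

variable {T T' : ℕ → Matrix ι κ ℂ} {c : ℤ → EuclideanSpace ℂ κ} {t : ℤ}

lemma filterOutput_sub (hs : Summable fun j : ℕ => WithLp.toLp 2 (T j *ᵥ c (t - j)))
    (hs' : Summable fun j : ℕ => WithLp.toLp 2 (T' j *ᵥ c (t - j))) :
    filterOutput T c t - filterOutput T' c t = filterOutput (T - T') c t := by
  rw [filterOutput, filterOutput, ← hs.tsum_sub hs']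
  simp [filterOutput, sub_mulVec]

lemma toLp_mulVec_filterOutput {ι' : Type*} [Fintype ι'] [DecidableEq ι] (A : Matrix ι' ι ℂ)
    (hs : Summable fun j : ℕ => WithLp.toLp 2 (T j *ᵥ c (t - j))) :
    WithLp.toLp 2 (A *ᵥ filterOutput T c t) = filterOutput (fun j => A * T j) c t := by
  simpa [filterOutput, mulVec_mulVec, toLpLin_apply] using
    (toEuclideanLin A).toContinuousLinearMap.map_tsum hs

variable [DecidableEq κ] {K M ρ : ℝ}

lemma norm_filterTerm_le (hT : ∀ j, ‖T j‖ ≤ K * ρ ^ j) (hc : ∀ j : ℕ, ‖c (t - j)‖ ≤ M)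
    (j : ℕ) : ‖WithLp.toLp 2 (T j *ᵥ c (t - j))‖ ≤ K * M * ρ ^ j :=
  calc _ ≤ ‖T j‖ * ‖c (t - j)‖ := l2_opNorm_mulVec _ _
    _ ≤ K * ρ ^ j * M := mul_le_mul (hT j) (hc j) (norm_nonneg _) ((norm_nonneg _).trans (hT j))
    _ = K * M * ρ ^ j := by ring

lemma summable_filterTerm (hρ0 : 0 ≤ ρ) (hρ : ρ < 1) (hT : ∀ j, ‖T j‖ ≤ K * ρ ^ j)
    (hc : ∀ j : ℕ, ‖c (t - j)‖ ≤ M) : Summable fun j : ℕ => WithLp.toLp 2 (T j *ᵥ c (t - j)) :=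
  .of_norm_bounded ((summable_geometric_of_lt_one hρ0 hρ).mul_left (K * M))
    (norm_filterTerm_le hT hc)

lemma norm_filterOutput_le {N : ℕ} (hρ0 : 0 ≤ ρ) (hρ : ρ < 1) (hT0 : ∀ j < N, T j = 0)
    (hT : ∀ j, ‖T j‖ ≤ K * ρ ^ j) (hc : ∀ j : ℕ, ‖c (t - j)‖ ≤ M) :
    ‖filterOutput T c t‖ ≤ K * M * ρ ^ N / (1 - ρ) := by
  let g : ℕ → ℝ := fun j => if j < N then 0 else K * M * ρ ^ j
  have hg : HasSum g (K * M * ρ ^ N / (1 - ρ)) := by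
    rw [← hasSum_nat_add_iff' N]
    have htail : (fun i => g (i + N)) = fun i => K * M * ρ ^ N * ρ ^ i := by
      ext i
      simp only [g, if_neg (Nat.not_lt.mpr (Nat.le_add_left N i)), pow_add]
      ring
    have hhead : ∑ i ∈ Finset.range N, g i = 0 :=
      Finset.sum_eq_zero fun i hi => if_pos (Finset.mem_range.mp hi)
    rw [htail, hhead, sub_zero, div_eq_mul_inv]
    exact (hasSum_geometric_of_lt_one hρ0 hρ).mul_left _
  refine tsum_of_norm_bounded hg fun j => ?_
  by_cases hj : j < N
  · simp [g, hj, hT0 j hj]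
  · simpa [g, hj] using norm_filterTerm_le hT hc j

end Filter

universe u

theorem exists_epsClose_of_impulseResponse_eq {ι κ od : Type*} [Fintype ι] [DecidableEq ι]
    [Fintype κ] [DecidableEq κ] [Fintype od] {W : Matrix ι ι ℂ} (hW : ‖W‖ < 1)
    (V : Matrix ι κ ℂ) {h : EuclideanSpace ℂ ι → EuclideanSpace ℂ od} (hh : Continuous h)
    (M : ℝ) {ε : ℝ} (hε : 0 < ε) :
    ∃ N : ℕ, ∀ {ι' : Type u} [Fintype ι'] [DecidableEq ι'] (W' : Matrix ι' ι' ℂ)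
      (V' : Matrix ι' κ ℂ) (A : Matrix ι ι' ℂ), ‖W'‖ < 1 →
      (∀ j, ‖A * (W' ^ j * V')‖ ≤ ‖V‖ * ‖W‖ ^ j) → (∀ j < N, A * (W' ^ j * V') = W ^ j * V) →
      EpsClose M ε W V h W' V' fun x => h (WithLp.toLp 2 (A *ᵥ x)) := by
  set ρ := ‖W‖
  have hρ0 : 0 ≤ ρ := norm_nonneg W
  obtain ⟨δ, hδ, hhδ⟩ := Metric.uniformContinuousOn_iff.mp
    ((isCompact_closedBall (0 : EuclideanSpace ℂ ι) (‖V‖ * M / (1 - ρ))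
      ).uniformContinuousOn_of_continuous hh.continuousOn) ε hε
  have hsmall : Tendsto (fun N => 2 * ‖V‖ * M * ρ ^ N / (1 - ρ)) atTop (𝓝 0) := by
    simpa using ((tendsto_pow_atTop_nhds_zero_of_lt_one hρ0 hW).const_mul (2 * ‖V‖ * M)).div_const
      (1 - ρ)
  obtain ⟨N, hN⟩ := (hsmall.eventually (gt_mem_nhds hδ)).exists
  refine ⟨N, fun W' V' A hW' hA hAN c hc t ht => ?_⟩
  have hct : ∀ j : ℕ, ‖c (t - j)‖ ≤ M := fun j => hc _ (by omega)
  have hWV : ∀ j, ‖W ^ j * V‖ ≤ ‖V‖ * ρ ^ j := l2_opNorm_pow_mul_le W V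
  have hW'V' : ∀ j, ‖W' ^ j * V'‖ ≤ ‖V'‖ * ‖W'‖ ^ j := l2_opNorm_pow_mul_le W' V'
  have hstate := norm_filterOutput_le (N := 0) hρ0 hW (by simp) hWV hct
  dsimp only
  rw [resState_eq_filterOutput, resState_eq_filterOutput, ← dist_eq_norm,
    toLp_mulVec_filterOutput A (summable_filterTerm (norm_nonneg _) hW' hW'V' hct)]
  have hreadout := norm_filterOutput_le (N := 0) hρ0 hW (by simp) hA hct
  refine hhδ _ (by simpa using hstate) _ (by simpa using hreadout) ?_
  rw [dist_eq_norm, filterOutput_sub (summable_filterTerm hρ0 hW hWV hct)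
    (summable_filterTerm hρ0 hW hA hct)]
  have hdiff : ∀ j, ‖(W ^ j * V) - A * (W' ^ j * V')‖ ≤ 2 * ‖V‖ * ρ ^ j := fun j =>
    (norm_sub_le _ _).trans (by linarith [hWV j, hA j])
  exact (norm_filterOutput_le hρ0 hW (fun j hj => sub_eq_zero.mpr (hAN j hj).symm) hdiff
    hct).trans_lt hN

lemma permMatrix_eq_perm_permMatrix {ι : Type*} [DecidableEq ι] (σ : Equiv.Perm ι) :
    permMatrix σ = σ.permMatrix ℂ := by
  ext i j
  simp [permMatrix, eq_comm]

lemma Equiv.Perm.permMatrix_pow {ι R : Type*} [DecidableEq ι] [Fintype ι] [Semiring R]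
    (σ : Equiv.Perm ι) (j : ℕ) : (σ ^ j).permMatrix R = σ.permMatrix R ^ j := by
  induction j with
  | zero => simp
  | succ j ih => rw [pow_succ, permMatrix_mul, ih, pow_succ']

lemma Equiv.subRight_pow_apply {G : Type*} [AddCommGroup G] (a x : G) (j : ℕ) :
    (Equiv.subRight a ^ j) x = x - j • a := by
  induction j with
  | zero => simp
  | succ j ih => rw [pow_succ', Equiv.Perm.mul_apply, ih, Equiv.subRight_apply, succ_nsmul, sub_sub]

lemma Matrix.blockDiagonal_const_smul_permMatrix {ι o R : Type*} [DecidableEq ι] [DecidableEq o]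
    [Semiring R] (z : R) (σ : Equiv.Perm ι) :
    blockDiagonal (fun _ : o => z • σ.permMatrix R) =
      z • Equiv.Perm.permMatrix R (σ.prodCongr (Equiv.refl o)) := by
  ext ⟨i, c⟩ ⟨i', c'⟩
  by_cases hc : c = c' <;> simp [blockDiagonal_apply, hc, eq_comm]

lemma Matrix.norm_blockDiagonal_const_smul_permMatrix {ι o : Type*} [Fintype ι] [DecidableEq ι]
    [Nonempty ι] [Fintype o] [DecidableEq o] [Nonempty o] {ρ : ℝ} (hρ : 0 ≤ ρ)
    (σ : Equiv.Perm ι) : ‖blockDiagonal (fun _ : o => (ρ : ℂ) • σ.permMatrix ℂ)‖ = ρ := by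
  rw [blockDiagonal_const_smul_permMatrix, norm_smul, permMatrix_l2_opNorm_eq, Complex.norm_real,
    Real.norm_of_nonneg hρ, mul_one]

lemma Matrix.blockDiagonal_const_smul_permMatrix_pow_mul {ι o κ R : Type*} [Fintype ι]
    [DecidableEq ι] [Fintype o] [DecidableEq o] [CommRing R] (z : R) (σ : Equiv.Perm ι)
    (X : Matrix (ι × o) κ R) (j : ℕ) :
    blockDiagonal (fun _ : o => z • σ.permMatrix R) ^ j * X =
      z ^ j • X.submatrix (Prod.map ⇑(σ ^ j) id) id := by
  have hpow : (fun _ : o => z • σ.permMatrix R) ^ j = fun _ => z ^ j • (σ ^ j).permMatrix R := by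
    ext1
    simp [smul_pow, Equiv.Perm.permMatrix_pow]
  rw [← blockDiagonal_pow, hpow, blockDiagonal_const_smul_permMatrix, smul_mul,
    PEquiv.toMatrix_toPEquiv_mul]
  rfl

section SMCR

open Fin.NatCast Fin.CommRing

variable {ι : Type*} {N m : ℕ} [NeZero N]

lemma isFullCycle_subRight_one (N : ℕ) [NeZero N] : IsFullCycle (Equiv.subRight (1 : Fin N)) :=
  fun i j => ⟨(i - j : Fin N), by
    rw [Equiv.subRight_pow_apply, nsmul_one, Fin.cast_val_eq_self, sub_sub_cancel]⟩

def smcrInput (N m : ℕ) [NeZero N] : Matrix (Fin N × Fin (m + 1)) (Fin m) ℂ :=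
  fun x q => if x = (0, q.succ) then -1 else 1

lemma smcrInput_eq_one_or_neg_one (x : Fin N × Fin (m + 1)) (q : Fin m) :
    smcrInput N m x q = 1 ∨ smcrInput N m x q = -1 := by
  unfold smcrInput
  split_ifs <;> simp

/-- Column `0` of each cycle carries minus the sum of the other columns, so that the readout
annihilates the all-ones part of `smcrInput`. -/
noncomputable def smcrReadout (T : Fin N → Matrix ι (Fin m) ℂ) :
    Matrix ι (Fin N × Fin (m + 1)) ℂ :=
  fun p x => (Fin.cons (∑ q, T x.1 p q) fun q => -T x.1 p q : Fin (m + 1) → ℂ) x.2 / 2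

lemma smcrReadout_mul_submatrix_smcrInput (T : Fin N → Matrix ι (Fin m) ℂ) (s : Fin N) :
    smcrReadout T * (smcrInput N m).submatrix (Prod.map (· - s) id) id = T s := by
  ext p q
  have hrow : ∀ i, ∑ c, smcrReadout T p (i, c) = 0 := by
    intro i
    simp [smcrReadout, Fin.sum_univ_succ, ← Finset.sum_div]
  have hinput : ∀ x, (smcrInput N m).submatrix (Prod.map (· - s) id) id x q =
      1 - if x = (s, q.succ) then 2 else 0 := by
    rintro ⟨i, c⟩
    simp only [smcrInput, submatrix_apply, Prod.map_apply, id, Prod.mk.injEq, sub_eq_zero]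
    split_ifs <;> norm_num
  calc (smcrReadout T * (smcrInput N m).submatrix (Prod.map (· - s) id) id) p q
      = ∑ i, ∑ c, smcrReadout T p (i, c) - smcrReadout T p (s, q.succ) * 2 := by
        simp only [mul_apply, hinput, mul_sub, mul_one, mul_ite, mul_zero, Finset.sum_sub_distrib,
          Finset.sum_ite_eq', Finset.mem_univ, if_true, Fintype.sum_prod_type]
    _ = T s p q := by
        rw [Finset.sum_eq_zero fun i _ => hrow i]
        simp [smcrReadout]

lemma smcrReadout_mul_pow_mul_smcrInput (T : Fin N → Matrix ι (Fin m) ℂ) (z : ℂ) (j : ℕ) :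
    smcrReadout T * (blockDiagonal (fun _ : Fin (m + 1) =>
      z • permMatrix (Equiv.subRight (1 : Fin N))) ^ j * smcrInput N m) = z ^ j • T j := by
  have hshift : ⇑(Equiv.subRight (1 : Fin N) ^ j) = (· - (j : Fin N)) := by
    ext1 i
    rw [Equiv.subRight_pow_apply, nsmul_one]
  rw [permMatrix_eq_perm_permMatrix, blockDiagonal_const_smul_permMatrix_pow_mul, hshift,
    Matrix.mul_smul, smcrReadout_mul_submatrix_smcrInput]

lemma smcrReadout_mul_pow_mul_smcrInput_eq_periodized [Fintype ι] [DecidableEq ι]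
    (W : Matrix ι ι ℂ) (V : Matrix ι (Fin m) ℂ) {z : ℂ} (hz : z ≠ 0) (j : ℕ) :
    smcrReadout (fun i : Fin N => z⁻¹ ^ (i : ℕ) • (W ^ (i : ℕ) * V)) *
      (blockDiagonal (fun _ : Fin (m + 1) => z • permMatrix (Equiv.subRight (1 : Fin N))) ^ j *
        smcrInput N m) = z ^ (N * (j / N)) • (W ^ (j % N) * V) := by
  rw [smcrReadout_mul_pow_mul_smcrInput, Fin.val_natCast, smul_smul]
  congr 1
  calc z ^ j * z⁻¹ ^ (j % N) = z ^ (N * (j / N)) * (z ^ (j % N) * z⁻¹ ^ (j % N)) := by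
        rw [← mul_assoc, ← pow_add, Nat.div_add_mod]
    _ = z ^ (N * (j / N)) := by rw [← mul_pow, mul_inv_cancel₀ hz, one_pow, mul_one]

end SMCR

theorem smcr_universal_general
    (n m d : ℕ) (W : Matrix (Fin n) (Fin n) ℂ) (hW : opNorm W < 1) (hW0 : 0 < opNorm W)
    (V : Matrix (Fin n) (Fin m) ℂ)
    (h : EuclideanSpace ℂ (Fin n) → EuclideanSpace ℂ (Fin d)) (hh : Continuous h)
    (M : ℝ) (ε : ℝ) (hε : 0 < ε) :
    ∃ (k nb : ℕ), 0 < k ∧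
      ∃ (B : Matrix (Fin nb) (Fin nb) ℂ) (V' : Matrix (Fin nb × Fin k) (Fin m) ℂ)
        (h' : EuclideanSpace ℂ (Fin nb × Fin k) → EuclideanSpace ℂ (Fin d)),
        IsContractiveFullCycle B ∧
        (∀ (i : Fin nb × Fin k) (j : Fin m), V' i j = 1 ∨ V' i j = -1) ∧
        opNorm (Matrix.blockDiagonal fun _ : Fin k => B) = opNorm W ∧
        Continuous h' ∧ LinTransformedDomain h h' ∧
        EpsClose M ε W V h (Matrix.blockDiagonal fun _ : Fin k => B) V' h' := by
  rw [opNorm_eq_norm] at hW hW0 ⊢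
  obtain ⟨N, hN⟩ := exists_epsClose_of_impulseResponse_eq hW V hh M hε
  have hρ : (‖W‖ : ℂ) ≠ 0 := Complex.ofReal_ne_zero.mpr hW0.ne'
  set A := smcrReadout fun i : Fin (N + 1) => (‖W‖ : ℂ)⁻¹ ^ (i : ℕ) • (W ^ (i : ℕ) * V)
  have hnorm : ‖blockDiagonal fun _ : Fin (m + 1) =>
      (‖W‖ : ℂ) • permMatrix (Equiv.subRight (1 : Fin (N + 1)))‖ = ‖W‖ := by
    rw [permMatrix_eq_perm_permMatrix, norm_blockDiagonal_const_smul_permMatrix hW0.le]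
  refine ⟨m + 1, N + 1, m.succ_pos, (‖W‖ : ℂ) • permMatrix (Equiv.subRight 1),
    smcrInput (N + 1) m, fun x => h (WithLp.toLp 2 (A *ᵥ x)),
    ⟨‖W‖, _, hW0, hW, isFullCycle_subRight_one _, rfl⟩, smcrInput_eq_one_or_neg_one, hnorm,
    hh.comp (toEuclideanLin A).toContinuousLinearMap.continuous, ⟨A, fun _ => rfl⟩,
    hN _ _ A (hnorm.trans_lt hW) (fun j => ?_) (fun j hj => ?_)⟩
  · rw [smcrReadout_mul_pow_mul_smcrInput_eq_periodized W V hρ]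
    exact (l2_opNorm_pow_smul_pow_mul_le W V _ _).trans_eq (by rw [Nat.div_add_mod])
  · rw [smcrReadout_mul_pow_mul_smcrInput_eq_periodized W V hρ, Nat.div_eq_of_lt (by omega),
      Nat.mod_eq_of_lt (by omega), mul_zero, pow_zero, one_smul]

theorem smcr_universal
    (n m d : ℕ) (W : Matrix (Fin n) (Fin n) ℂ) (hW : opNorm W < 1) (hW0 : 0 < opNorm W)
    (V : Matrix (Fin n) (Fin m) ℂ)
    (h : EuclideanSpace ℂ (Fin n) → EuclideanSpace ℂ (Fin d)) (hh : Continuous h)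
    (M : ℝ) (hM : 0 < M) (ε : ℝ) (hε : 0 < ε) :
    ∃ (k nb : ℕ), 0 < k ∧
      ∃ (B : Matrix (Fin nb) (Fin nb) ℂ) (V' : Matrix (Fin nb × Fin k) (Fin m) ℂ)
        (h' : EuclideanSpace ℂ (Fin nb × Fin k) → EuclideanSpace ℂ (Fin d)),
        IsContractiveFullCycle B ∧
        (∀ (i : Fin nb × Fin k) (j : Fin m), V' i j = 1 ∨ V' i j = -1) ∧
        opNorm (Matrix.blockDiagonal fun _ : Fin k => B) = opNorm W ∧
        Continuous h' ∧ LinTransformedDomain h h' ∧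
        EpsClose M ε W V h (Matrix.blockDiagonal fun _ : Fin k => B) V' h' :=
  smcr_universal_general n m d W hW hW0 V h hh M ε hε
end

section
/- For every n×m complex matrix V and every δ > 0 there exist a positive integer N, a positive integer k with gcd(k, n) = 1, and matrices F₁, …, F_k, each an n×m matrix such that either all entries of F_j lie in {−1, 1} or all entries of F_j lie in {−i, i}, such that ‖V − (1/N) ∑_{j=1}^k F_j‖ < δ, where ‖·‖ denotes the operator norm. -/
/-! Approximate `N • V` entrywise by a sum of `a` matrices with entries `±1` and `b` matrices with
entries `±i`. The sums of `a` signs are the numbers `2 s - a` with `0 ≤ s ≤ a`, so one of them lies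
within `2` of any real number in `[-a, a]`; treating real and imaginary parts separately, the
entrywise error after dividing by `N` is at most `4 / N`, and the operator norm is bounded by the sum
of the entry norms, `4 n m / N`. Choosing `a = n K` and `b = n K + 1`, with `K` bounding the
entries of `N • V`, makes `k = a + b ≡ 1 (mod n)`. -/

open Finset Complex Matrix

lemma EuclideanSpace.norm_le_sum_norm {𝕜 ι : Type*} [RCLike 𝕜] [Fintype ι]
    (x : EuclideanSpace 𝕜 ι) : ‖x‖ ≤ ∑ i, ‖x i‖ := by
  rw [EuclideanSpace.norm_eq, Real.sqrt_le_left (by positivity)]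
  exact sum_sq_le_sq_sum_of_nonneg fun i _ => norm_nonneg _

lemma opNorm_le_sum_norm_entries {ι κ : Type*} [Fintype ι] [Fintype κ] [DecidableEq κ]
    (A : Matrix ι κ ℂ) : opNorm A ≤ ∑ i, ∑ j, ‖A i j‖ := by
  refine ContinuousLinearMap.opNorm_le_bound _ (by positivity) fun x => ?_
  calc ‖toEuclideanLin A x‖ ≤ ∑ i, ‖(A *ᵥ x) i‖ := EuclideanSpace.norm_le_sum_norm _
    _ ≤ ∑ i, ∑ j, ‖A i j‖ * ‖x‖ := by
      gcongr with i
      refine (norm_sum_le _ _).trans (sum_le_sum fun j _ => ?_)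
      rw [norm_mul]
      gcongr
      exact PiLp.norm_apply_le x j
    _ = (∑ i, ∑ j, ‖A i j‖) * ‖x‖ := by simp_rw [sum_mul]

lemma opNorm_le_of_norm_entry_le {ι κ : Type*} [Fintype ι] [Fintype κ] [DecidableEq κ]
    {A : Matrix ι κ ℂ} {r : ℝ} (h : ∀ i j, ‖A i j‖ ≤ r) :
    opNorm A ≤ Fintype.card ι * Fintype.card κ * r :=
  calc opNorm A ≤ ∑ i, ∑ j, ‖A i j‖ := opNorm_le_sum_norm_entries A
    _ ≤ ∑ _i : ι, ∑ _j : κ, r := by gcongr; exact h _ _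
    _ = Fintype.card ι * Fintype.card κ * r := by simp [mul_assoc]

lemma opNorm_smul {ι κ : Type*} [Fintype ι] [Fintype κ] [DecidableEq κ] (c : ℂ)
    (A : Matrix ι κ ℂ) : opNorm (c • A) = ‖c‖ * opNorm A := by
  simp only [opNorm, map_smul, norm_smul]

lemma exists_signs_sum_near {a : ℕ} {x : ℝ} (hx : |x| ≤ a) :
    ∃ ε : Fin a → ℝ, (∀ j, ε j = 1 ∨ ε j = -1) ∧ |∑ j, ε j - x| ≤ 2 := by
  obtain ⟨hxl, hxu⟩ := abs_le.mp hx
  set s := ⌊(x + a) / 2⌋₊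
  have hsa : s ≤ a := Nat.floor_le_of_le (by linarith)
  have hs_le : (s : ℝ) ≤ (x + a) / 2 := Nat.floor_le (by linarith)
  have hs_gt : (x + a) / 2 < s + 1 := Nat.lt_floor_add_one _
  refine ⟨fun j => if (j : ℕ) < s then 1 else -1, fun j => ?_, ?_⟩
  · by_cases h : (j : ℕ) < s <;> simp [h]
  have hsum : ∑ j : Fin a, (if (j : ℕ) < s then (1 : ℝ) else -1) = 2 * s - a := by
    have hneg : #{j : Fin a | ¬(j : ℕ) < s} = a - s := by
      rw [filter_not, card_univ_sdiff, Fintype.card_fin, Fin.card_filter_val_lt, min_eq_right hsa]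
    rw [sum_ite, sum_const, sum_const, Fin.card_filter_val_lt, min_eq_right hsa, hneg]
    simp [Nat.cast_sub hsa]
    ring
  rw [hsum, abs_le]
  constructor <;> linarith

lemma exists_pm_one_pm_I_sum_near {ι κ : Type*} {a b : ℕ} (W : Matrix ι κ ℂ)
    (hre : ∀ i l, |(W i l).re| ≤ a) (him : ∀ i l, |(W i l).im| ≤ b) :
    ∃ F : Fin (a + b) → Matrix ι κ ℂ,
      (∀ j, (∀ i l, F j i l = 1 ∨ F j i l = -1) ∨ (∀ i l, F j i l = I ∨ F j i l = -I)) ∧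
      ∀ i l, ‖(∑ j, F j) i l - W i l‖ ≤ 4 := by
  choose ε hε hεW using fun i l => exists_signs_sum_near (hre i l)
  choose η hη hηW using fun i l => exists_signs_sum_near (him i l)
  refine ⟨Fin.append (fun j => of fun i l => (ε i l j : ℂ)) (fun j => of fun i l => η i l j * I),
    fun j => ?_, fun i l => ?_⟩
  · refine Fin.addCases (fun j => .inl fun i l => ?_) (fun j => .inr fun i l => ?_) j
    · rcases hε i l j with h | h <;> simp [h]
    · rcases hη i l j with h | h <;> simp [h]
  · refine (norm_le_abs_re_add_abs_im _).trans ?_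
    simp only [Matrix.sum_apply, Fin.sum_univ_add, Fin.append_left, Fin.append_right, of_apply,
      sub_re, add_re, re_sum, ofReal_re, mul_re, I_re, mul_zero, ofReal_im, I_im, mul_one, sub_self,
      sum_const_zero, add_zero, sub_im, add_im, im_sum, mul_im, zero_add]
    linarith [hεW i l, hηW i l]

theorem approx_complex_matrix_by_pm_one_pm_i_general
    (n m : ℕ) (V : Matrix (Fin n) (Fin m) ℂ)
    (δ : ℝ) (hδ : 0 < δ) :
    ∃ (N k : ℕ), 0 < N ∧ 0 < k ∧ Nat.gcd k n = 1 ∧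
      ∃ F : Fin k → Matrix (Fin n) (Fin m) ℂ,
        (∀ j : Fin k,
          (∀ (i : Fin n) (l : Fin m), F j i l = 1 ∨ F j i l = -1) ∨
          (∀ (i : Fin n) (l : Fin m), F j i l = Complex.I ∨ F j i l = -Complex.I)) ∧
        opNorm (V - ((N : ℂ)⁻¹ : ℂ) • ∑ j, F j) < δ := by
  obtain ⟨N, hN⟩ := exists_nat_gt (4 * n * m / δ)
  have hN0 : (0 : ℝ) < N := lt_of_le_of_lt (by positivity) hN
  obtain ⟨K, hK⟩ := Finite.exists_le fun p : Fin n × Fin m => ⌈‖((N : ℂ) • V) p.1 p.2‖⌉₊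
  have hNV : ∀ i l, ‖((N : ℂ) • V) i l‖ ≤ (n * K : ℕ) := fun i l =>
    (Nat.le_ceil _).trans (by exact_mod_cast (hK (i, l)).trans (Nat.le_mul_of_pos_left K i.pos))
  obtain ⟨F, hF, hFV⟩ := exists_pm_one_pm_I_sum_near (a := n * K) (b := n * K + 1) ((N : ℂ) • V)
    (fun i l => (abs_re_le_norm _).trans (hNV i l))
    (fun i l => (abs_im_le_norm _).trans ((hNV i l).trans (by simp)))
  refine ⟨N, n * K + (n * K + 1), by exact_mod_cast hN0, by omega, ?_, F, hF, ?_⟩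
  · rw [show n * K + (n * K + 1) = 1 + n * (2 * K) by ring]
    simp
  have hVF : V - (N : ℂ)⁻¹ • ∑ j, F j = (-(N : ℂ)⁻¹) • (∑ j, F j - (N : ℂ) • V) := by
    rw [smul_sub, smul_smul, neg_mul, inv_mul_cancel₀ (by exact_mod_cast hN0.ne'), neg_smul,
      neg_smul, one_smul]
    abel
  calc opNorm (V - (N : ℂ)⁻¹ • ∑ j, F j) = (N : ℝ)⁻¹ * opNorm (∑ j, F j - (N : ℂ) • V) := by
        rw [hVF, opNorm_smul, norm_neg, norm_inv, Complex.norm_natCast]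
    _ ≤ (N : ℝ)⁻¹ * (n * m * 4) := by
        gcongr
        exact (opNorm_le_of_norm_entry_le (A := ∑ j, F j - (N : ℂ) • V) hFV).trans_eq (by simp)
    _ < δ := by
        rw [div_lt_iff₀ hδ] at hN
        rw [inv_mul_lt_iff₀ hN0]
        linarith

theorem approx_complex_matrix_by_pm_one_pm_i
    (n m : ℕ) (hn : 0 < n) (hm : 0 < m) (V : Matrix (Fin n) (Fin m) ℂ)
    (δ : ℝ) (hδ : 0 < δ) :
    ∃ (N k : ℕ), 0 < N ∧ 0 < k ∧ Nat.gcd k n = 1 ∧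
      ∃ F : Fin k → Matrix (Fin n) (Fin m) ℂ,
        (∀ j : Fin k,
          (∀ (i : Fin n) (l : Fin m), F j i l = 1 ∨ F j i l = -1) ∨
          (∀ (i : Fin n) (l : Fin m), F j i l = Complex.I ∨ F j i l = -Complex.I)) ∧
        opNorm (V - ((N : ℂ)⁻¹ : ℂ) • ∑ j, F j) < δ :=
  approx_complex_matrix_by_pm_one_pm_i_general n m V δ hδ
end
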